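/- Differentiating the HJB equation ∂ₜV = −∇ξVᵀ f(ξ) − ½‖Fᵀ∇ξV‖² + (α/2)‖y(t) − Cξ‖² twice in ξ yields, for V of class C³ in ξ: ∂ₜ∇²ξξV(t,ξ) = −∇²ξξV(t,ξ) Df(ξ) − Df(ξ)ᵀ ∇²ξξV(t,ξ) − ∇²ξξV FFᵀ ∇²ξξV − D(Df(ξ)ᵀ)∇ξV(t,ξ) + αCᵀC − ∇³ξV(t,ξ)·(f(ξ) + FFᵀ∇ξV(t,ξ)). -/

import Mathlib

open Matrix

noncomputable def dotCLM {n : ℕ} (g : Fin n → ℝ) : (Fin n → ℝ) →L[ℝ] ℝ :=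
  LinearMap.toContinuousLinearMap
    { toFun := fun v => g ⬝ᵥ v
      map_add' := by intro x y; simp [dotProduct_add]
      map_smul' := by intro c x; simp [dotProduct_smul] }

noncomputable def mvCLM {n k : ℕ} (M : Matrix (Fin n) (Fin k) ℝ) :
    (Fin k → ℝ) →L[ℝ] (Fin n → ℝ) :=
  LinearMap.toContinuousLinearMap M.mulVecLin

open Filter Topology

/-! Differentiating the HJB equation once in `ξ` and using uniqueness of Fréchet derivatives
identifies the spatial gradient `Gt` of `Vt`; by symmetry of the Hessian it is
`-(H f + Jᵀ G) - H F Fᵀ G + α Cᵀ (C ξ - y)`. Differentiating the `i`-th entry of this formula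
once more gives the `i`-th row of `Hts`, and the symmetry of the third derivative in its last
two indices turns the term `(f + F Fᵀ G)ᵀ ∇(H_i)` into `∇³V · (f + F Fᵀ G)`. -/

section
variable {n k p : ℕ}

@[simp] lemma dotCLM_apply (g v : Fin n → ℝ) : dotCLM g v = g ⬝ᵥ v := rfl

@[simp] lemma mvCLM_apply (M : Matrix (Fin n) (Fin k) ℝ) (v : Fin k → ℝ) :
    mvCLM M v = M *ᵥ v := rfl

lemma dotCLM_injective : Function.Injective (dotCLM (n := n)) := by
  intro a b h
  funext j
  simpa using congrArg (fun L => L (Pi.single j 1)) h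

lemma dotCLM_add (a b : Fin n → ℝ) : dotCLM (a + b) = dotCLM a + dotCLM b := by
  ext v; simp [add_dotProduct]

lemma dotCLM_sub (a b : Fin n → ℝ) : dotCLM (a - b) = dotCLM a - dotCLM b := by
  ext v; simp [sub_dotProduct]

lemma dotCLM_neg (a : Fin n → ℝ) : dotCLM (-a) = -dotCLM a := by
  ext v; simp

lemma dotCLM_smul (c : ℝ) (a : Fin n → ℝ) : dotCLM (c • a) = c • dotCLM a := by
  ext v; simp

lemma mvCLM_neg (M : Matrix (Fin n) (Fin k) ℝ) : mvCLM (-M) = -mvCLM M := by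
  ext v; simp [neg_mulVec]

noncomputable def dotCLMHom : (Fin n → ℝ) →L[ℝ] ((Fin n → ℝ) →L[ℝ] ℝ) :=
  LinearMap.toContinuousLinearMap
    { toFun := dotCLM
      map_add' := dotCLM_add
      map_smul' := dotCLM_smul }

lemma dotCLM_comp_mvCLM (a : Fin k → ℝ) (M : Matrix (Fin k) (Fin n) ℝ) :
    (dotCLM a).comp (mvCLM M) = dotCLM (a ᵥ* M) := by
  ext v; simp [dotProduct_mulVec]

lemma mvCLM_mul (A : Matrix (Fin n) (Fin k) ℝ) (B : Matrix (Fin k) (Fin p) ℝ) :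
    mvCLM (A * B) = (mvCLM A).comp (mvCLM B) := by
  ext v; simp [mulVec_mulVec]

lemma proj_comp_mvCLM (M : Matrix (Fin k) (Fin n) ℝ) (i : Fin k) :
    (ContinuousLinearMap.proj i : (Fin k → ℝ) →L[ℝ] ℝ).comp (mvCLM M) = dotCLM (M i) := by
  ext v; simp [mulVec]

lemma hasFDerivAt_mvCLM_iff {g : (Fin n → ℝ) → Fin k → ℝ} {M : Matrix (Fin k) (Fin n) ℝ}
    {x : Fin n → ℝ} :
    HasFDerivAt g (mvCLM M) x ↔ ∀ i, HasFDerivAt (fun z => g z i) (dotCLM (M i)) x := by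
  simp only [hasFDerivAt_pi', proj_comp_mvCLM]

end

section
variable {n k p : ℕ} {u v : (Fin n → ℝ) → Fin k → ℝ} {A B : Matrix (Fin k) (Fin n) ℝ}
  {x : Fin n → ℝ}

theorem HasFDerivAt.dotProduct (hu : HasFDerivAt u (mvCLM A) x) (hv : HasFDerivAt v (mvCLM B) x) :
    HasFDerivAt (fun z => u z ⬝ᵥ v z) (dotCLM (v x ᵥ* A + u x ᵥ* B)) x := by
  refine (dotCLMHom.hasFDerivAt_of_bilinear hu hv).congr_fderiv ?_
  ext w
  simp [dotCLMHom, add_dotProduct, dotProduct_mulVec, dotProduct_comm (A *ᵥ w), add_comm]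

theorem HasFDerivAt.const_dotProduct (a : Fin k → ℝ) (hu : HasFDerivAt u (mvCLM A) x) :
    HasFDerivAt (fun z => a ⬝ᵥ u z) (dotCLM (a ᵥ* A)) x := by
  rw [← dotCLM_comp_mvCLM]
  exact (dotCLM a).hasFDerivAt.comp x hu

theorem HasFDerivAt.const_mulVec (M : Matrix (Fin p) (Fin k) ℝ) (hu : HasFDerivAt u (mvCLM A) x) :
    HasFDerivAt (fun z => M *ᵥ u z) (mvCLM (M * A)) x := by
  rw [mvCLM_mul]
  exact (mvCLM M).hasFDerivAt.comp x hu

theorem hasFDerivAt_mulVec (M : Matrix (Fin k) (Fin n) ℝ) :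
    HasFDerivAt (fun z => M *ᵥ z) (mvCLM M) x :=
  (mvCLM M).hasFDerivAt

theorem isSymm_of_hasFDerivAt_gradient {V : (Fin n → ℝ) → ℝ} {G : (Fin n → ℝ) → Fin n → ℝ}
    {H : Matrix (Fin n) (Fin n) ℝ} (hV : ∀ᶠ y in 𝓝 x, HasFDerivAt V (dotCLM (G y)) y)
    (hG : HasFDerivAt G (mvCLM H) x) : H.IsSymm := by
  have hG' : HasFDerivAt (fun y => dotCLM (G y)) (dotCLMHom.comp (mvCLM H)) x :=
    dotCLMHom.hasFDerivAt.comp x hG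
  ext i j
  simpa [dotCLMHom, mulVec_single, dotProduct_single] using
    second_derivative_symmetric_of_eventually hV hG' (Pi.single i 1) (Pi.single j 1)

end

section
variable {n m r : ℕ} {G f : (Fin n → ℝ) → Fin n → ℝ} {H J : Matrix (Fin n) (Fin n) ℝ}
  {x : Fin n → ℝ}

theorem hasFDerivAt_hjb_rhs (hG : HasFDerivAt G (mvCLM H) x) (hf : HasFDerivAt f (mvCLM J) x)
    (hH : H.IsSymm) (F : Matrix (Fin n) (Fin m) ℝ) (C : Matrix (Fin r) (Fin n) ℝ) (α : ℝ)
    (w : Fin r → ℝ) :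
    HasFDerivAt (fun ζ => -(G ζ ⬝ᵥ f ζ) - (1/2) * ((Fᵀ *ᵥ G ζ) ⬝ᵥ (Fᵀ *ᵥ G ζ))
        + (α/2) * ((w - C *ᵥ ζ) ⬝ᵥ (w - C *ᵥ ζ)))
      (dotCLM (-(H *ᵥ f x + Jᵀ *ᵥ G x) - H *ᵥ ((F * Fᵀ) *ᵥ G x)
        + α • (Cᵀ *ᵥ (C *ᵥ x - w)))) x := by
  have hFG := hG.const_mulVec Fᵀ
  have hCw : HasFDerivAt (fun ζ => w - C *ᵥ ζ) (mvCLM (-C)) x := by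
    simpa [mvCLM_neg] using (hasFDerivAt_mulVec C).const_sub w
  refine (((hG.dotProduct hf).neg.sub ((hFG.dotProduct hFG).const_mul (1/2))).add
    ((hCw.dotProduct hCw).const_mul (α/2))).congr_fderiv ?_
  rw [← dotCLM_neg, ← dotCLM_smul, ← dotCLM_smul, ← dotCLM_sub, ← dotCLM_add]
  congr 1
  have hHv : ∀ v, v ᵥ* H = H *ᵥ v := fun v => by conv_rhs => rw [← hH.eq, mulVec_transpose]
  have hquad : (Fᵀ *ᵥ G x) ᵥ* (Fᵀ * H) = H *ᵥ ((F * Fᵀ) *ᵥ G x) := by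
    rw [← vecMul_vecMul, vecMul_transpose, hHv, mulVec_mulVec (G x)]
  have hCw_vecMul : (w - C *ᵥ x) ᵥ* (-C) = Cᵀ *ᵥ (C *ᵥ x - w) := by
    rw [vecMul_neg, ← mulVec_transpose, ← mulVec_neg, neg_sub]
  rw [hHv, ← mulVec_transpose J, hquad, hCw_vecMul]
  module

end

section
variable {n m r : ℕ} {G f : (Fin n → ℝ) → Fin n → ℝ} {H J : (Fin n → ℝ) → Matrix (Fin n) (Fin n) ℝ}
  {S T : Matrix (Fin n) (Fin n) ℝ} {x : Fin n → ℝ}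

theorem hasFDerivAt_hjb_gradient_apply (i : Fin n) (hG : HasFDerivAt G (mvCLM (H x)) x)
    (hf : HasFDerivAt f (mvCLM (J x)) x) (hHi : HasFDerivAt (fun ζ => H ζ i) (mvCLM T) x)
    (hJi : HasFDerivAt (fun ζ => (J ζ)ᵀ i) (mvCLM S) x) (hT : T.IsSymm)
    (F : Matrix (Fin n) (Fin m) ℝ) (C : Matrix (Fin r) (Fin n) ℝ) (α : ℝ) (w : Fin r → ℝ) :
    HasFDerivAt (fun ζ => (-(H ζ *ᵥ f ζ + (J ζ)ᵀ *ᵥ G ζ) - H ζ *ᵥ ((F * Fᵀ) *ᵥ G ζ)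
        + α • (Cᵀ *ᵥ (C *ᵥ ζ - w))) i)
      (dotCLM (-(H x i ᵥ* J x) - (J x)ᵀ i ᵥ* H x - H x i ᵥ* (F * Fᵀ * H x) - Sᵀ *ᵥ G x
        + α • (Cᵀ i ᵥ* C) - T *ᵥ (f x + (F * Fᵀ) *ᵥ G x))) x := by
  have hHf := hHi.dotProduct hf
  have hJG := hJi.dotProduct hG
  have hHFG := hHi.dotProduct (hG.const_mulVec (F * Fᵀ))
  have hC := ((hasFDerivAt_mulVec (x := x) C).sub_const w).const_dotProduct (Cᵀ i)
  refine (((hHf.add hJG).neg.sub hHFG).add (hC.const_mul α)).congr_fderiv ?_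
  rw [← dotCLM_smul, ← dotCLM_add, ← dotCLM_neg, ← dotCLM_sub, ← dotCLM_add]
  congr 1
  have hTv : T *ᵥ (f x + (F * Fᵀ) *ᵥ G x) = (f x + (F * Fᵀ) *ᵥ G x) ᵥ* T := by
    conv_lhs => rw [← hT.eq, mulVec_transpose]
  rw [mulVec_transpose, hTv, add_vecMul]
  module

end

theorem HJB_twice_differentiated_general
    {n m r : ℕ}
    (f : (Fin n → ℝ) → (Fin n → ℝ)) (J : (Fin n → ℝ) → Matrix (Fin n) (Fin n) ℝ)
    (S : (Fin n → ℝ) → Fin n → Fin n → (Fin n → ℝ))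
    (hf : ∀ ξ, HasFDerivAt f (mvCLM (J ξ)) ξ)
    -- f is C² : the gradient of ξ ↦ (Df(ξ))_{k i} is S ξ k i
    (hS : ∀ (ξ : Fin n → ℝ) (k i : Fin n), HasFDerivAt (fun ζ => J ζ k i) (dotCLM (S ξ k i)) ξ)
    (F : Matrix (Fin n) (Fin m) ℝ) (C : Matrix (Fin r) (Fin n) ℝ)
    (α : ℝ)
    (y : ℝ → Fin r → ℝ)
    (V : ℝ → (Fin n → ℝ) → ℝ)
    (G Gt : ℝ → (Fin n → ℝ) → (Fin n → ℝ))
    (H Hts : ℝ → (Fin n → ℝ) → Matrix (Fin n) (Fin n) ℝ)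
    (T3 : ℝ → (Fin n → ℝ) → Fin n → Fin n → (Fin n → ℝ))
    (Vt : ℝ → (Fin n → ℝ) → ℝ)
    (hG : ∀ (t : ℝ) (ξ : Fin n → ℝ), HasFDerivAt (V t) (dotCLM (G t ξ)) ξ)
    (hH : ∀ (t : ℝ) (ξ : Fin n → ℝ), HasFDerivAt (fun ζ => G t ζ) (mvCLM (H t ξ)) ξ)
    -- V is C³ in ξ: the gradient of the Hessian entry H_{i j} is T3 t ξ i j
    (hT3 : ∀ (t : ℝ) (ξ : Fin n → ℝ) (i j : Fin n),
      HasFDerivAt (fun ζ => H t ζ i j) (dotCLM (T3 t ξ i j)) ξ)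
    -- Schwarz: spatial derivatives of the time partials
    (hmix1 : ∀ (t : ℝ) (ξ : Fin n → ℝ), HasFDerivAt (fun ζ => Vt t ζ) (dotCLM (Gt t ξ)) ξ)
    (hmix2 : ∀ (t : ℝ) (ξ : Fin n → ℝ), HasFDerivAt (fun ζ => Gt t ζ) (mvCLM (Hts t ξ)) ξ)
    -- the HJB equation
    (hHJB : ∀ (t : ℝ) (ξ : Fin n → ℝ), Vt t ξ =
      -(G t ξ ⬝ᵥ f ξ)
      - (1/2) * ((Fᵀ *ᵥ G t ξ) ⬝ᵥ (Fᵀ *ᵥ G t ξ))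
      + (α/2) * ((y t - C *ᵥ ξ) ⬝ᵥ (y t - C *ᵥ ξ))) :
    ∀ (t : ℝ) (ξ : Fin n → ℝ),
      Hts t ξ =
        - H t ξ * J ξ - (J ξ)ᵀ * H t ξ
        - H t ξ * (F * Fᵀ) * H t ξ
        - Matrix.of (fun i j => ∑ k, S ξ k i j * G t ξ k)
        + α • (Cᵀ * C)
        - Matrix.of (fun i j => T3 t ξ i j ⬝ᵥ (f ξ + (F * Fᵀ) *ᵥ G t ξ)) := by
  intro t ξ
  have hHsymm : ∀ ζ, (H t ζ).IsSymm := fun ζ =>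
    isSymm_of_hasFDerivAt_gradient (Eventually.of_forall (hG t)) (hH t ζ)
  have hHrow : ∀ i, HasFDerivAt (fun ζ => H t ζ i) (mvCLM (of fun j l => T3 t ξ i j l)) ξ :=
    fun i => hasFDerivAt_mvCLM_iff.2 fun j => hT3 t ξ i j
  have hTsymm : ∀ i, (of fun j l => T3 t ξ i j l).IsSymm := fun i =>
    isSymm_of_hasFDerivAt_gradient
      (Eventually.of_forall fun ζ => hasFDerivAt_mvCLM_iff.1 (hH t ζ) i) (hHrow i)
  have hGt_eq : ∀ ζ, Gt t ζ = -(H t ζ *ᵥ f ζ + (J ζ)ᵀ *ᵥ G t ζ) - H t ζ *ᵥ ((F * Fᵀ) *ᵥ G t ζ)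
      + α • (Cᵀ *ᵥ (C *ᵥ ζ - y t)) := fun ζ => by
    refine dotCLM_injective ((hmix1 t ζ).unique ?_)
    simpa only [hHJB] using hasFDerivAt_hjb_rhs (hH t ζ) (hf ζ) (hHsymm ζ) F C α (y t)
  ext i j
  have hrow := hasFDerivAt_hjb_gradient_apply i (hH t ξ) (hf ξ) (hHrow i)
    (hasFDerivAt_mvCLM_iff.2 fun k => hS ξ k i) (hTsymm i) F C α (y t)
  simp only [← hGt_eq] at hrow
  rw [dotCLM_injective ((hasFDerivAt_mvCLM_iff.1 (hmix2 t ξ) i).unique hrow)]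
  simp only [Matrix.sub_apply, Matrix.add_apply, Matrix.smul_apply, Matrix.neg_mul,
    Matrix.neg_apply, Matrix.mul_assoc, mul_apply_eq_vecMul]
  rfl

theorem HJB_twice_differentiated
    {n m r : ℕ}
    (f : (Fin n → ℝ) → (Fin n → ℝ)) (J : (Fin n → ℝ) → Matrix (Fin n) (Fin n) ℝ)
    (S : (Fin n → ℝ) → Fin n → Fin n → (Fin n → ℝ))
    (hf : ∀ ξ, HasFDerivAt f (mvCLM (J ξ)) ξ)
    -- f is C² : the gradient of ξ ↦ (Df(ξ))_{k i} is S ξ k i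
    (hS : ∀ (ξ : Fin n → ℝ) (k i : Fin n), HasFDerivAt (fun ζ => J ζ k i) (dotCLM (S ξ k i)) ξ)
    (F : Matrix (Fin n) (Fin m) ℝ) (C : Matrix (Fin r) (Fin n) ℝ)
    (α : ℝ) (hα : 0 < α)
    (y : ℝ → Fin r → ℝ) (hy : Continuous y)
    (V : ℝ → (Fin n → ℝ) → ℝ)
    (G Gt : ℝ → (Fin n → ℝ) → (Fin n → ℝ))
    (H Hts : ℝ → (Fin n → ℝ) → Matrix (Fin n) (Fin n) ℝ)
    (T3 : ℝ → (Fin n → ℝ) → Fin n → Fin n → (Fin n → ℝ))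
    (Vt : ℝ → (Fin n → ℝ) → ℝ)
    (hVt : ∀ (t : ℝ) (ξ : Fin n → ℝ), HasDerivAt (fun s => V s ξ) (Vt t ξ) t)
    (hG : ∀ (t : ℝ) (ξ : Fin n → ℝ), HasFDerivAt (V t) (dotCLM (G t ξ)) ξ)
    (hH : ∀ (t : ℝ) (ξ : Fin n → ℝ), HasFDerivAt (fun ζ => G t ζ) (mvCLM (H t ξ)) ξ)
    -- V is C³ in ξ: the gradient of the Hessian entry H_{i j} is T3 t ξ i j
    (hT3 : ∀ (t : ℝ) (ξ : Fin n → ℝ) (i j : Fin n),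
      HasFDerivAt (fun ζ => H t ζ i j) (dotCLM (T3 t ξ i j)) ξ)
    (hGt : ∀ (t : ℝ) (ξ : Fin n → ℝ), HasDerivAt (fun s => G s ξ) (Gt t ξ) t)
    (hHts : ∀ (t : ℝ) (ξ : Fin n → ℝ) (i j : Fin n),
      HasDerivAt (fun s => H s ξ i j) (Hts t ξ i j) t)
    -- Schwarz: spatial derivatives of the time partials
    (hmix1 : ∀ (t : ℝ) (ξ : Fin n → ℝ), HasFDerivAt (fun ζ => Vt t ζ) (dotCLM (Gt t ξ)) ξ)
    (hmix2 : ∀ (t : ℝ) (ξ : Fin n → ℝ), HasFDerivAt (fun ζ => Gt t ζ) (mvCLM (Hts t ξ)) ξ)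
    -- the HJB equation
    (hHJB : ∀ (t : ℝ) (ξ : Fin n → ℝ), Vt t ξ =
      -(G t ξ ⬝ᵥ f ξ)
      - (1/2) * ((Fᵀ *ᵥ G t ξ) ⬝ᵥ (Fᵀ *ᵥ G t ξ))
      + (α/2) * ((y t - C *ᵥ ξ) ⬝ᵥ (y t - C *ᵥ ξ))) :
    ∀ (t : ℝ) (ξ : Fin n → ℝ),
      Hts t ξ =
        - H t ξ * J ξ - (J ξ)ᵀ * H t ξ
        - H t ξ * (F * Fᵀ) * H t ξ
        - Matrix.of (fun i j => ∑ k, S ξ k i j * G t ξ k)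
        + α • (Cᵀ * C)
        - Matrix.of (fun i j => T3 t ξ i j ⬝ᵥ (f ξ + (F * Fᵀ) *ᵥ G t ξ)) :=
  HJB_twice_differentiated_general f J S hf hS F C α y V G Gt H Hts T3 Vt hG hH hT3 hmix1 hmix2 hHJB
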